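/- Let G be a finite simple undirected graph with no isolated vertices, let v be a unit eigenvector of L with eigenvalue λ that is orthogonal to D^{1/2}𝟙, and let x = D^{-1/2} v (so ‖x‖_∞ > 0). Let c be a real constant and let (w(u))_{u∈V(G)} be pairwise independent {0,1}-valued random variables such that E[w(u)] = c + x(u)/(2‖x‖_∞) for every u (in particular these values lie in [0,1]). Then E[(D^{1/2}w)^T (I − L)(D^{1/2}w)] = E[w^T A w] = c² · vol(G) + (1 − λ)/(4‖x‖_∞²). -/

import Mathlib

open Matrix Finset MeasureTheory ProbabilityTheory

/-!
Since `A` has zero diagonal, `E[wᵀ A w]` only involves `E[w(u) w(u')]` with `u ≠ u'`, which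
pairwise independence factors into products of means; hence it is the quadratic form `pᵀ A p`
of the mean vector `p = c𝟙 + x / (2‖x‖_∞)`. Because `A = D^{1/2} (I - L) D^{1/2}`, the harmonic
vector satisfies `A x = (1 - λ) D^{1/2} v`, so orthogonality of `v` to `D^{1/2}𝟙` kills the cross
terms of `pᵀ A p` and `xᵀ A x = (1 - λ) vᵀ v = 1 - λ`.
-/

/-- The degree-based volume of a vertex subset: the sum of the degrees of its vertices. -/
def gvol {n : ℕ} (G : SimpleGraph (Fin n)) [DecidableRel G.Adj] (S : Finset (Fin n)) : ℕ :=
  ∑ v ∈ S, G.degree v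

/-- The diagonal matrix `D^{1/2}` of square roots of the vertex degrees. -/
noncomputable def dHalf {n : ℕ} (G : SimpleGraph (Fin n)) [DecidableRel G.Adj] :
    Matrix (Fin n) (Fin n) ℝ :=
  Matrix.diagonal fun v => Real.sqrt (G.degree v)

/-- The diagonal matrix `D^{-1/2}` of inverse square roots of the vertex degrees. -/
noncomputable def dHalfInv {n : ℕ} (G : SimpleGraph (Fin n)) [DecidableRel G.Adj] :
    Matrix (Fin n) (Fin n) ℝ :=
  Matrix.diagonal fun v => (Real.sqrt (G.degree v))⁻¹

/-- The normalized Laplacian `D^{-1/2} (D - A) D^{-1/2}`. -/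
noncomputable def normLap {n : ℕ} (G : SimpleGraph (Fin n)) [DecidableRel G.Adj] :
    Matrix (Fin n) (Fin n) ℝ :=
  dHalfInv G * G.lapMatrix ℝ * dHalfInv G

namespace Matrix

variable {ι κ R : Type*} [Fintype ι] [Fintype κ] [CommSemiring R]

theorem mulVec_dotProduct_eq_dotProduct_transpose_mulVec (M : Matrix ι κ R) (a : κ → R)
    (b : ι → R) :
    (M *ᵥ a) ⬝ᵥ b = a ⬝ᵥ (Mᵀ *ᵥ b) := by
  rw [mulVec_transpose, dotProduct_comm, dotProduct_mulVec, dotProduct_comm]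

theorem mulVec_dotProduct_mulVec_mulVec (M : Matrix ι κ R) (P : Matrix ι ι R) (y : κ → R) :
    (M *ᵥ y) ⬝ᵥ (P *ᵥ (M *ᵥ y)) = y ⬝ᵥ ((Mᵀ * P * M) *ᵥ y) := by
  rw [mulVec_dotProduct_eq_dotProduct_transpose_mulVec, mulVec_mulVec, mulVec_mulVec]

theorem dotProduct_mulVec_eq_sum_sum (M : Matrix ι κ R) (a : ι → R) (b : κ → R) :
    a ⬝ᵥ M *ᵥ b = ∑ i, ∑ j, M i j * (a i * b j) := by
  simp only [dotProduct, mulVec, Finset.mul_sum]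
  exact Finset.sum_congr rfl fun i _ => Finset.sum_congr rfl fun j _ => by ring

end Matrix

section PairwiseIndependent

variable {ι Ω : Type*} [Fintype ι] [MeasurableSpace Ω] {μ : Measure Ω}

theorem integral_dotProduct_mulVec_of_pairwise_indepFun (M : Matrix ι ι ℝ)
    (hM : ∀ i, M i i = 0) (w : Ω → ι → ℝ) (hint : ∀ i, Integrable (fun ω => w ω i) μ)
    (hindep : Pairwise fun i j => IndepFun (fun ω => w ω i) (fun ω => w ω j) μ) :
    ∫ ω, w ω ⬝ᵥ M *ᵥ w ω ∂μ
      = (fun i => ∫ ω, w ω i ∂μ) ⬝ᵥ M *ᵥ (fun i => ∫ ω, w ω i ∂μ) := by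
  have hterm : ∀ i j, Integrable (fun ω => M i j * (w ω i * w ω j)) μ ∧
      ∫ ω, M i j * (w ω i * w ω j) ∂μ = M i j * ((∫ ω, w ω i ∂μ) * ∫ ω, w ω j ∂μ) := by
    intro i j
    obtain rfl | hij := eq_or_ne i j
    · simp [hM]
    · exact ⟨((hindep hij).integrable_mul (hint i) (hint j)).const_mul _, by
        rw [integral_const_mul, (hindep hij).integral_fun_mul_eq_mul_integral
          (hint i).aestronglyMeasurable (hint j).aestronglyMeasurable]⟩
  simp_rw [dotProduct_mulVec_eq_sum_sum]
  rw [integral_finsetSum _ fun i _ => integrable_finsetSum _ fun j _ => (hterm i j).1]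
  refine Finset.sum_congr rfl fun i _ => ?_
  rw [integral_finsetSum _ fun j _ => (hterm i j).1]
  exact Finset.sum_congr rfl fun j _ => (hterm i j).2

end PairwiseIndependent

section NormalizedLaplacian

variable {n : ℕ} (G : SimpleGraph (Fin n)) [DecidableRel G.Adj]

theorem dHalf_transpose : (dHalf G)ᵀ = dHalf G :=
  diagonal_transpose _

theorem dHalf_mul_dHalf : dHalf G * dHalf G = G.degMatrix ℝ := by
  rw [dHalf, SimpleGraph.degMatrix, diagonal_mul_diagonal]
  exact congrArg diagonal (funext fun u => Real.mul_self_sqrt (Nat.cast_nonneg _))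

variable {G}

theorem sqrt_degree_ne_zero (hdeg : ∀ u, 0 < G.degree u) (u : Fin n) :
    Real.sqrt (G.degree u) ≠ 0 :=
  (Real.sqrt_pos.mpr (by exact_mod_cast hdeg u)).ne'

theorem dHalf_mul_dHalfInv (hdeg : ∀ u, 0 < G.degree u) : dHalf G * dHalfInv G = 1 := by
  rw [dHalf, dHalfInv, diagonal_mul_diagonal, ← diagonal_one]
  exact congrArg diagonal (funext fun u => mul_inv_cancel₀ (sqrt_degree_ne_zero hdeg u))

theorem dHalfInv_mul_dHalf (hdeg : ∀ u, 0 < G.degree u) : dHalfInv G * dHalf G = 1 := by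
  rw [dHalfInv, dHalf, diagonal_mul_diagonal, ← diagonal_one]
  exact congrArg diagonal (funext fun u => inv_mul_cancel₀ (sqrt_degree_ne_zero hdeg u))

theorem dHalf_mul_one_sub_normLap_mul_dHalf (hdeg : ∀ u, 0 < G.degree u) :
    dHalf G * (1 - normLap G) * dHalf G = G.adjMatrix ℝ := by
  have hL : dHalf G * normLap G * dHalf G = G.lapMatrix ℝ := by
    simp only [normLap, ← mul_assoc, dHalf_mul_dHalfInv hdeg, one_mul]
    rw [mul_assoc, dHalfInv_mul_dHalf hdeg, mul_one]
  rw [mul_sub, sub_mul, mul_one, hL, dHalf_mul_dHalf, SimpleGraph.lapMatrix, sub_sub_cancel]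

theorem adjMatrix_mulVec_dHalfInv_mulVec (hdeg : ∀ u, 0 < G.degree u) {lam : ℝ} {v : Fin n → ℝ}
    (heig : normLap G *ᵥ v = lam • v) :
    G.adjMatrix ℝ *ᵥ (dHalfInv G *ᵥ v) = (1 - lam) • (dHalf G *ᵥ v) := by
  rw [← dHalf_mul_one_sub_normLap_mul_dHalf hdeg, mulVec_mulVec, mul_assoc,
    dHalf_mul_dHalfInv hdeg, mul_one, ← mulVec_mulVec, sub_mulVec, one_mulVec, heig,
    sub_smul, one_smul, mulVec_sub, mulVec_smul]

theorem dHalfInv_mulVec_dotProduct_dHalf_mulVec (hdeg : ∀ u, 0 < G.degree u) (v : Fin n → ℝ) :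
    (dHalfInv G *ᵥ v) ⬝ᵥ (dHalf G *ᵥ v) = v ⬝ᵥ v := by
  rw [mulVec_dotProduct_eq_dotProduct_transpose_mulVec, dHalfInv, diagonal_transpose, ← dHalfInv,
    mulVec_mulVec, dHalfInv_mul_dHalf hdeg, one_mulVec]

theorem one_dotProduct_adjMatrix_mulVec_one :
    1 ⬝ᵥ G.adjMatrix ℝ *ᵥ 1 = (gvol G univ : ℝ) := by
  simp [dotProduct, gvol]

theorem const_add_smul_dotProduct_adjMatrix_mulVec (hdeg : ∀ u, 0 < G.degree u) {lam : ℝ}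
    {v : Fin n → ℝ} (hunit : v ⬝ᵥ v = 1) (horth : v ⬝ᵥ dHalf G *ᵥ 1 = 0)
    (heig : normLap G *ᵥ v = lam • v) (c t : ℝ) :
    (c • 1 + t • (dHalfInv G *ᵥ v)) ⬝ᵥ G.adjMatrix ℝ *ᵥ (c • 1 + t • (dHalfInv G *ᵥ v))
      = c ^ 2 * gvol G univ + t ^ 2 * (1 - lam) := by
  set x := dHalfInv G *ᵥ v
  have hAx : G.adjMatrix ℝ *ᵥ x = (1 - lam) • (dHalf G *ᵥ v) :=
    adjMatrix_mulVec_dHalfInv_mulVec hdeg heig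
  have h1x : 1 ⬝ᵥ G.adjMatrix ℝ *ᵥ x = 0 := by
    rw [hAx, dotProduct_smul, dotProduct_comm, mulVec_dotProduct_eq_dotProduct_transpose_mulVec,
      dHalf_transpose, horth, smul_zero]
  have hx1 : x ⬝ᵥ G.adjMatrix ℝ *ᵥ 1 = 0 := by
    rw [dotProduct_comm, mulVec_dotProduct_eq_dotProduct_transpose_mulVec,
      SimpleGraph.transpose_adjMatrix, h1x]
  have hxx : x ⬝ᵥ G.adjMatrix ℝ *ᵥ x = 1 - lam := by
    rw [hAx, dotProduct_smul, dHalfInv_mulVec_dotProduct_dHalf_mulVec hdeg, hunit, smul_eq_mul,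
      mul_one]
  simp only [mulVec_add, mulVec_smul, dotProduct_add, add_dotProduct, smul_dotProduct,
    dotProduct_smul, smul_eq_mul, one_dotProduct_adjMatrix_mulVec_one, h1x, hx1, hxx]
  ring

end NormalizedLaplacian

/-- Let `G` have no isolated vertices, let `v` be a unit eigenvector of the normalized
Laplacian with eigenvalue `λ`, orthogonal to `D^{1/2}𝟙`, and let `x = D^{-1/2} v`, with
`‖x‖_∞` its sup-norm. If `(w(u))_u` are pairwise independent `{0,1}`-valued random
variables with `E[w(u)] = c + x(u)/(2‖x‖_∞)`, then
`E[(D^{1/2}w)ᵀ(I - L)(D^{1/2}w)] = E[wᵀ A w] = c²·vol(G) + (1 - λ)/(4‖x‖_∞²)`. -/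
theorem expectation_quadform_random_partition {n : ℕ} (hn : 0 < n)
    (G : SimpleGraph (Fin n)) [DecidableRel G.Adj]
    (hdeg : ∀ u, 0 < G.degree u)
    (lam : ℝ) (v : Fin n → ℝ)
    (hunit : v ⬝ᵥ v = 1)
    (horth : v ⬝ᵥ (dHalf G).mulVec (fun _ => 1) = 0)
    (heig : (normLap G).mulVec v = lam • v)
    (x : Fin n → ℝ) (hx : x = (dHalfInv G).mulVec v)
    (xinf : ℝ)
    (hxinf : xinf = Finset.univ.sup' (Finset.univ_nonempty_iff.mpr ⟨⟨0, hn⟩⟩)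
      (fun u => |x u|))
    {Ω : Type*} [MeasureSpace Ω] [IsProbabilityMeasure (ℙ : Measure Ω)]
    (w : Ω → Fin n → ℝ)
    (hmeas : ∀ u, Measurable fun ω => w ω u)
    (h01 : ∀ u ω, w ω u = 0 ∨ w ω u = 1)
    (hindep : ∀ u u', u ≠ u' → IndepFun (fun ω => w ω u) (fun ω => w ω u'))
    (c : ℝ) (hmean : ∀ u, (∫ ω, w ω u) = c + x u / (2 * xinf)) :
    (∫ ω, ((dHalf G).mulVec (w ω)) ⬝ᵥ
        ((1 - normLap G).mulVec ((dHalf G).mulVec (w ω))))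
      = (∫ ω, (w ω) ⬝ᵥ (G.adjMatrix ℝ).mulVec (w ω)) ∧
    (∫ ω, (w ω) ⬝ᵥ (G.adjMatrix ℝ).mulVec (w ω))
      = c ^ 2 * (gvol G Finset.univ : ℝ) + (1 - lam) / (4 * xinf ^ 2) := by
  have hxinf_pos : 0 < xinf := by
    have hxv : x ⬝ᵥ dHalf G *ᵥ v = 1 := by
      rw [hx, dHalfInv_mulVec_dotProduct_dHalf_mulVec hdeg, hunit]
    obtain ⟨u, hu⟩ : ∃ u, x u ≠ 0 := by
      by_contra! h
      simp [show x = 0 from funext h] at hxv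
    rw [hxinf, Finset.lt_sup'_iff]
    exact ⟨u, mem_univ u, abs_pos.mpr hu⟩
  have hint : ∀ u, Integrable fun ω => w ω u := fun u =>
    .of_bound (hmeas u).aestronglyMeasurable 1
      (ae_of_all _ fun ω => by rcases h01 u ω with h | h <;> simp [h])
  have hmean_vec : (fun u => ∫ ω, w ω u) = c • 1 + (2 * xinf)⁻¹ • x := by
    funext u
    simp [hmean, div_eq_inv_mul]
  refine ⟨integral_congr_ae (ae_of_all _ fun ω => ?_), ?_⟩
  · dsimp only
    rw [mulVec_dotProduct_mulVec_mulVec, dHalf_transpose,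
      dHalf_mul_one_sub_normLap_mul_dHalf hdeg]
  · rw [integral_dotProduct_mulVec_of_pairwise_indepFun _ (fun u => by simp) w hint hindep,
      hmean_vec, hx, const_add_smul_dotProduct_adjMatrix_mulVec hdeg hunit horth heig]
    field_simp
    ring
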